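/- arXiv:1111.2761 — 4 statements merged into one kernel-verified Lean document; each statement's English description precedes it below -/
import Mathlib

section
/- Fix an integer N ≥ 2 and reals β > 0, t > 0. Define Z(a) = ∫_{(−∞,a]^{N−1}} ∏_{i=1}^{N−1} exp(−Nβλ_i²/(4t)) (a−λ_i)^β · ∏_{1≤i<j≤N−1} |λ_i−λ_j|^β dλ. Then a ↦ ln Z(a) is differentiable on ℝ, with d/da ln Z(a) = β · E_a[Σ_{i=1}^{N−1} 1/(a−λ_i)], where E_a denotes expectation with respect to the probability measure on (−∞,a]^{N−1} whose density is proportional to the integrand of Z(a). -/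
open MeasureTheory Filter

/-- Integrand of the constrained partition function: the β-ensemble weight of `N - 1`
eigenvalues with Gaussian weight `exp(-Nβλ²/(4t))` and hard-wall factor `(a - λᵢ)^β`. -/
noncomputable def wallWeight (N : ℕ) (β t a : ℝ) (l : Fin (N - 1) → ℝ) : ℝ :=
  (∏ i, Real.exp (-(N * β * (l i) ^ 2) / (4 * t)) * (a - l i) ^ β) *
    ∏ i, ∏ j ∈ Finset.Ioi i, |l i - l j| ^ β

/-- `Z(a) = ∫_{(-∞,a]^{N-1}} wallWeight`. -/
noncomputable def wallZ (N : ℕ) (β t : ℝ) (a : ℝ) : ℝ :=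
  ∫ l in {l : Fin (N - 1) → ℝ | ∀ i, l i ≤ a}, wallWeight N β t a l

/-- The probability measure on `(-∞,a]^{N-1}` with density proportional to the
integrand of `Z(a)`. -/
noncomputable def wallMeasure (N : ℕ) (β t : ℝ) (a : ℝ) : Measure (Fin (N - 1) → ℝ) :=
  (volume.restrict {l | ∀ i, l i ≤ a}).withDensity fun l =>
    ENNReal.ofReal (wallWeight N β t a l / wallZ N β t a)

/-! Extend the integrand of `Z(a)` by zero to all of `ℝⁿ` (`n = N - 1`), writing it as
`F(a, λ) = ∏ᵢ (a - λᵢ)₊^β · w(λ)` with `w` the Gaussian β-ensemble weight. For fixed `λ`,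
`a ↦ F(a, λ)` is continuous and differentiable off the finitely many points `λᵢ`, with derivative
`G(a, λ) = β Σᵢ (a - λᵢ)⁻¹ F(a, λ) ≥ 0`, so `F(b, λ) - F(a, λ) = ∫_a^b G(s, λ) ds`. For `β < 1`
the derivative `G` is not locally bounded in `a`, so one cannot differentiate under the integral
sign directly. Instead, the substitution `λ = a - ν` moves all dependence on `a` into the Gaussian
factor; this gives an integrable envelope for `G(s, ·)`, locally uniform in `s`, so that
`D(s) = ∫ G(s, λ) dλ` is continuous. Fubini then gives `Z(b) - Z(a) = ∫_a^b D`, hence `Z' = D`,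
and `D(a) / Z(a)` is `β` times the `E_a`-expectation of `Σᵢ (a - λᵢ)⁻¹`. -/

open MeasureTheory Finset Real

lemma posPart_rpow_eq_zero_of_nonpos {r x : ℝ} (hr : r ≠ 0) (hx : x ≤ 0) : x⁺ ^ r = 0 := by
  rw [posPart_eq_zero.2 hx, zero_rpow hr]

lemma hasDerivAt_posPart_rpow (r : ℝ) {x : ℝ} (hx : x ≠ 0) :
    HasDerivAt (fun y : ℝ => y⁺ ^ r) (r * x⁻¹ * x⁺ ^ r) x := by
  rcases hx.lt_or_gt with hx | hx
  · have hzero : (fun y : ℝ => y⁺ ^ r) =ᶠ[nhds x] fun _ => (0 : ℝ) ^ r := by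
      filter_upwards [Iio_mem_nhds hx] with y hy
      rw [posPart_eq_zero.2 hy.le]
    have hderiv : r * x⁻¹ * x⁺ ^ r = 0 := by
      rw [posPart_eq_zero.2 hx.le]
      rcases eq_or_ne r 0 with rfl | hr
      · simp
      · rw [zero_rpow hr, mul_zero]
    rw [hderiv]
    exact (hasDerivAt_const x _).congr_of_eventuallyEq hzero
  · have hself : (fun y : ℝ => y⁺ ^ r) =ᶠ[nhds x] fun y => y ^ r := by
      filter_upwards [Ioi_mem_nhds hx] with y hy
      rw [posPart_eq_self.2 hy.le]
    rw [posPart_eq_self.2 hx.le, mul_assoc, inv_mul_eq_div, ← rpow_sub_one hx.ne']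
    exact (hasDerivAt_rpow_const (Or.inl hx.ne')).congr_of_eventuallyEq hself

lemma abs_inv_mul_posPart_rpow_le {β : ℝ} (hβ : 0 < β) (x : ℝ) :
    |x⁻¹| * x⁺ ^ β ≤ x⁺ ^ (β - 1) := by
  rcases le_or_gt x 0 with hx | hx
  · rw [posPart_rpow_eq_zero_of_nonpos hβ.ne' hx, mul_zero]
    exact rpow_nonneg (posPart_nonneg x) _
  · rw [posPart_eq_self.2 hx.le, abs_of_pos (inv_pos.2 hx), rpow_sub_one hx.ne', inv_mul_eq_div]

lemma integrable_posPart_rpow_mul_exp {c r : ℝ} (hc : 0 < c) (hr : -1 < r) (K : ℝ) :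
    Integrable fun x : ℝ => x⁺ ^ r * exp (-(c * x ^ 2) + K * |x|) := by
  have hbound := ((integrable_rpow_mul_exp_neg_mul_sq (half_pos hc) hr).norm.add
    (integrable_exp_neg_mul_sq (half_pos hc))).const_mul (exp (K ^ 2 / (2 * c)))
  refine hbound.mono' (by fun_prop) (ae_of_all _ fun x => ?_)
  have hexp : exp (-(c * x ^ 2) + K * |x|) ≤ exp (K ^ 2 / (2 * c)) * exp (-(c / 2) * x ^ 2) := by
    have hamgm : K * |x| ≤ K ^ 2 / (2 * c) + c / 2 * x ^ 2 := by
      rw [div_add' _ _ _ (by positivity), le_div_iff₀ (by positivity), ← sq_abs x]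
      nlinarith [sq_nonneg (c * |x| - K)]
    rw [← exp_add]
    exact exp_le_exp.2 (by linarith)
  have hpow : x⁺ ^ r ≤ ‖x ^ r‖ + 1 := by
    rcases le_or_gt x 0 with hx | hx
    · rw [posPart_eq_zero.2 hx]
      rcases eq_or_ne r 0 with rfl | hr0
      · simp
      · simp [zero_rpow hr0, add_nonneg]
    · rw [posPart_eq_self.2 hx.le, norm_eq_abs]
      linarith [le_abs_self (x ^ r)]
  rw [norm_of_nonneg (mul_nonneg (rpow_nonneg (posPart_nonneg x) _) (exp_pos _).le)]
  calc x⁺ ^ r * exp (-(c * x ^ 2) + K * |x|)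
      ≤ (‖x ^ r‖ + 1) * (exp (K ^ 2 / (2 * c)) * exp (-(c / 2) * x ^ 2)) :=
        mul_le_mul hpow hexp (exp_pos _).le (by positivity)
    _ = exp (K ^ 2 / (2 * c)) * (‖x ^ r * exp (-(c / 2) * x ^ 2)‖ + exp (-(c / 2) * x ^ 2)) := by
        rw [norm_mul, norm_of_nonneg (exp_pos _).le]
        ring

lemma hasDerivAt_prod_posPart_sub_rpow {ι : Type*} [Fintype ι] (r : ℝ) (l : ι → ℝ) {s : ℝ}
    (hs : s ∉ Set.range l) :
    HasDerivAt (fun s => ∏ i, (s - l i)⁺ ^ r)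
      (r * (∑ i, (s - l i)⁻¹) * ∏ i, (s - l i)⁺ ^ r) s := by
  classical
  have hfactor (i : ι) :
      HasDerivAt (fun s => (s - l i)⁺ ^ r) (r * (s - l i)⁻¹ * (s - l i)⁺ ^ r) s :=
    (hasDerivAt_posPart_rpow r (sub_ne_zero.2 fun h => hs ⟨i, h.symm⟩)).comp_sub_const s (l i)
  refine (HasDerivAt.fun_finsetProd fun i _ => hfactor i).congr_deriv ?_
  rw [mul_sum, sum_mul]
  refine sum_congr rfl fun i _ => ?_
  rw [← mul_prod_erase univ (fun j => (s - l j)⁺ ^ r) (mem_univ i), smul_eq_mul]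
  ring

lemma abs_sum_inv_mul_prod_posPart_rpow_le {ι : Type*} [Fintype ι] {β : ℝ} (hβ : 0 < β)
    (ν : ι → ℝ) :
    |∑ i, (ν i)⁻¹| * ∏ i, (ν i)⁺ ^ β ≤
      Fintype.card ι * ∏ i, ((ν i)⁺ ^ (β - 1) + (ν i)⁺ ^ β) := by
  classical
  have hq (x : ℝ) : 0 ≤ x⁺ ^ (β - 1) := rpow_nonneg (posPart_nonneg x) _
  have hp (x : ℝ) : 0 ≤ x⁺ ^ β := rpow_nonneg (posPart_nonneg x) _
  calc |∑ i, (ν i)⁻¹| * ∏ i, (ν i)⁺ ^ β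
      ≤ ∑ i, |(ν i)⁻¹| * ∏ j, (ν j)⁺ ^ β := by
        rw [← sum_mul]
        exact mul_le_mul_of_nonneg_right (abs_sum_le_sum_abs _ _) (prod_nonneg fun j _ => hp _)
    _ ≤ ∑ _i, ∏ j, ((ν j)⁺ ^ (β - 1) + (ν j)⁺ ^ β) := sum_le_sum fun i _ => by
        rw [← mul_prod_erase univ (fun j => (ν j)⁺ ^ β) (mem_univ i),
          ← mul_prod_erase univ (fun j => (ν j)⁺ ^ (β - 1) + (ν j)⁺ ^ β) (mem_univ i),
          ← mul_assoc]
        exact mul_le_mul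
          ((abs_inv_mul_posPart_rpow_le hβ _).trans (le_add_of_nonneg_right (hp _)))
          (prod_le_prod (fun j _ => hp _) fun j _ => le_add_of_nonneg_left (hq _))
          (prod_nonneg fun j _ => hp _) (add_nonneg (hq _) (hp _))
    _ = Fintype.card ι * ∏ i, ((ν i)⁺ ^ (β - 1) + (ν i)⁺ ^ β) := by simp

lemma prod_prod_abs_sub_rpow_le {n : ℕ} {β : ℝ} (hβ : 0 ≤ β) (l : Fin n → ℝ) :
    ∏ i, ∏ j ∈ Ioi i, |l i - l j| ^ β ≤ ∏ i, exp (n ^ 2 * β * |l i|) := by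
  set S := ∑ k, |l k|
  have hfactor (i j : Fin n) (hij : i ≠ j) : |l i - l j| ^ β ≤ exp (β * S) := by
    have hdist : |l i - l j| ≤ exp S :=
      calc |l i - l j| ≤ |l i| + |l j| := abs_sub _ _
        _ = ∑ k ∈ {i, j}, |l k| := (sum_pair (f := fun k => |l k|) hij).symm
        _ ≤ S := sum_le_sum_of_subset_of_nonneg (subset_univ _) fun k _ _ => abs_nonneg _
        _ ≤ exp S := by linarith [add_one_le_exp S]
    rw [mul_comm, exp_mul]
    exact rpow_le_rpow (abs_nonneg _) hdist hβ
  calc ∏ i, ∏ j ∈ Ioi i, |l i - l j| ^ β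
      ≤ ∏ i, ∏ j ∈ Ioi i, exp (β * S) :=
        prod_le_prod (fun _ _ => prod_nonneg fun _ _ => rpow_nonneg (abs_nonneg _) _)
          fun i _ => prod_le_prod (fun _ _ => rpow_nonneg (abs_nonneg _) _)
            fun j hj => hfactor i j (mem_Ioi.1 hj).ne
    _ = exp (∑ i, ∑ j ∈ Ioi i, β * S) := by simp only [exp_sum]
    _ ≤ exp (∑ i : Fin n, ∑ j : Fin n, β * S) :=
        exp_le_exp.2 <| sum_le_sum fun _ _ =>
          sum_le_sum_of_subset_of_nonneg (subset_univ _) fun _ _ _ => by positivity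
    _ = ∏ i, exp (n ^ 2 * β * |l i|) := by
        rw [← exp_sum]
        simp only [sum_const, card_univ, Fintype.card_fin, nsmul_eq_mul, S, mul_sum]
        exact congrArg exp (sum_congr rfl fun i _ => by ring)

namespace HardWall

variable {n : ℕ} {c β : ℝ}

noncomputable def gaussianEnsembleWeight (c β : ℝ) (l : Fin n → ℝ) : ℝ :=
  (∏ i, exp (-(c * l i ^ 2))) * ∏ i, ∏ j ∈ Ioi i, |l i - l j| ^ β

/-- Beyond the wall the factor `(s - lᵢ)⁺ ^ β` is `0 ^ β`, which vanishes only for `β ≠ 0`. -/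
noncomputable def weight (c β s : ℝ) (l : Fin n → ℝ) : ℝ :=
  (∏ i, (s - l i)⁺ ^ β) * gaussianEnsembleWeight c β l

noncomputable def weightDeriv (c β s : ℝ) (l : Fin n → ℝ) : ℝ :=
  β * (∑ i, (s - l i)⁻¹) * weight c β s l

noncomputable def envelope (c β K : ℝ) (ν : Fin n → ℝ) : ℝ :=
  ∏ i, ((ν i)⁺ ^ (β - 1) + (ν i)⁺ ^ β) * exp (-(c * ν i ^ 2) + K * |ν i|)

lemma gaussianEnsembleWeight_nonneg (l : Fin n → ℝ) : 0 ≤ gaussianEnsembleWeight c β l :=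
  mul_nonneg (prod_nonneg fun _ _ => (exp_pos _).le)
    (prod_nonneg fun _ _ => prod_nonneg fun _ _ => rpow_nonneg (abs_nonneg _) _)

lemma weight_nonneg (s : ℝ) (l : Fin n → ℝ) : 0 ≤ weight c β s l :=
  mul_nonneg (prod_nonneg fun _ _ => rpow_nonneg (posPart_nonneg _) _)
    (gaussianEnsembleWeight_nonneg l)

lemma weightDeriv_nonneg (hβ : 0 < β) (s : ℝ) (l : Fin n → ℝ) : 0 ≤ weightDeriv c β s l := by
  by_cases hl : ∀ i, l i < s
  · exact mul_nonneg (mul_nonneg hβ.le (sum_nonneg fun i _ => inv_nonneg.2 (sub_pos.2 (hl i)).le))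
      (weight_nonneg s l)
  · simp only [not_forall, not_lt] at hl
    obtain ⟨i, hi⟩ := hl
    have hzero : weight c β s l = 0 := by
      rw [weight, prod_eq_zero (mem_univ i)
        (posPart_rpow_eq_zero_of_nonpos hβ.ne' (by linarith)), zero_mul]
    rw [weightDeriv, hzero, mul_zero]

lemma continuous_gaussianEnsembleWeight (hβ : 0 ≤ β) :
    Continuous (gaussianEnsembleWeight (n := n) c β) := by
  unfold gaussianEnsembleWeight
  fun_prop (disch := exact fun _ => Or.inr hβ)

lemma continuous_weight (hβ : 0 ≤ β) (s : ℝ) : Continuous (weight (n := n) c β s) := by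
  unfold weight
  have := continuous_gaussianEnsembleWeight (n := n) (c := c) hβ
  fun_prop (disch := exact fun _ => Or.inr hβ)

lemma continuous_weight_left (hβ : 0 ≤ β) (l : Fin n → ℝ) :
    Continuous fun s => weight c β s l := by
  unfold weight
  fun_prop (disch := exact fun _ => Or.inr hβ)

lemma measurable_weightDeriv_uncurry :
    Measurable fun p : ℝ × (Fin n → ℝ) => weightDeriv c β p.1 p.2 := by
  unfold weightDeriv weight gaussianEnsembleWeight
  fun_prop

lemma gaussianEnsembleWeight_sub_le (hc : 0 ≤ c) (hβ : 0 ≤ β) {s R : ℝ} (hs : |s| ≤ R)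
    (ν : Fin n → ℝ) :
    gaussianEnsembleWeight c β (fun i => s - ν i) ≤
      ∏ i, exp (-(c * ν i ^ 2) + (2 * c * R + n ^ 2 * β) * |ν i|) := by
  have hgauss (x : ℝ) : exp (-(c * (s - x) ^ 2)) ≤ exp (-(c * x ^ 2) + 2 * c * R * |x|) := by
    have hsx : s * x ≤ R * |x| :=
      (le_abs_self _).trans (by rw [abs_mul]; exact mul_le_mul_of_nonneg_right hs (abs_nonneg _))
    exact exp_le_exp.2 (by
      nlinarith [mul_nonneg hc (sq_nonneg s), mul_le_mul_of_nonneg_left hsx hc])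
  have hvdm : ∏ i, ∏ j ∈ Ioi i, |(s - ν i) - (s - ν j)| ^ β =
      ∏ i, ∏ j ∈ Ioi i, |ν i - ν j| ^ β := by
    simp_rw [sub_sub_sub_cancel_left, abs_sub_comm]
  rw [gaussianEnsembleWeight, hvdm]
  calc (∏ i, exp (-(c * (s - ν i) ^ 2))) * ∏ i, ∏ j ∈ Ioi i, |ν i - ν j| ^ β
      ≤ (∏ i, exp (-(c * ν i ^ 2) + 2 * c * R * |ν i|)) * ∏ i, exp (n ^ 2 * β * |ν i|) :=
        mul_le_mul (prod_le_prod (fun _ _ => (exp_pos _).le) fun i _ => hgauss _)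
          (prod_prod_abs_sub_rpow_le hβ ν)
          (prod_nonneg fun _ _ => prod_nonneg fun _ _ => rpow_nonneg (abs_nonneg _) _)
          (prod_nonneg fun _ _ => (exp_pos _).le)
    _ = ∏ i, exp (-(c * ν i ^ 2) + (2 * c * R + n ^ 2 * β) * |ν i|) := by
        rw [← prod_mul_distrib]
        exact prod_congr rfl fun i _ => by rw [← exp_add]; ring_nf

lemma weight_sub_le_envelope (hc : 0 ≤ c) (hβ : 0 ≤ β) {s R : ℝ} (hs : |s| ≤ R)
    (ν : Fin n → ℝ) :
    weight c β s (fun i => s - ν i) ≤ envelope c β (2 * c * R + n ^ 2 * β) ν := by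
  rw [weight, envelope, prod_mul_distrib]
  simp only [sub_sub_cancel]
  exact mul_le_mul (prod_le_prod (fun _ _ => rpow_nonneg (posPart_nonneg _) _)
      fun _ _ => le_add_of_nonneg_left (rpow_nonneg (posPart_nonneg _) _))
    (gaussianEnsembleWeight_sub_le hc hβ hs ν) (gaussianEnsembleWeight_nonneg _)
    (prod_nonneg fun _ _ => add_nonneg (rpow_nonneg (posPart_nonneg _) _)
      (rpow_nonneg (posPart_nonneg _) _))

lemma abs_weightDeriv_sub_le_envelope (hc : 0 ≤ c) (hβ : 0 < β) {s R : ℝ} (hs : |s| ≤ R)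
    (ν : Fin n → ℝ) :
    |weightDeriv c β s (fun i => s - ν i)| ≤
      n * β * envelope c β (2 * c * R + n ^ 2 * β) ν := by
  rw [weightDeriv, weight, envelope, prod_mul_distrib]
  simp only [sub_sub_cancel]
  rw [abs_mul, abs_mul, abs_mul, abs_of_pos hβ, abs_of_nonneg (gaussianEnsembleWeight_nonneg _),
    abs_of_nonneg (prod_nonneg fun _ _ => rpow_nonneg (posPart_nonneg _) _)]
  have hsum := abs_sum_inv_mul_prod_posPart_rpow_le hβ ν
  rw [Fintype.card_fin] at hsum
  calc β * |∑ i, (ν i)⁻¹| * ((∏ i, (ν i)⁺ ^ β) * gaussianEnsembleWeight c β fun i => s - ν i)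
      = β * (|∑ i, (ν i)⁻¹| * ∏ i, (ν i)⁺ ^ β) *
          gaussianEnsembleWeight c β (fun i => s - ν i) := by ring
    _ ≤ β * (n * ∏ i, ((ν i)⁺ ^ (β - 1) + (ν i)⁺ ^ β)) *
          ∏ i, exp (-(c * ν i ^ 2) + (2 * c * R + n ^ 2 * β) * |ν i|) := by
        gcongr
        · exact gaussianEnsembleWeight_nonneg _
        · exact gaussianEnsembleWeight_sub_le hc hβ.le hs ν
    _ = _ := by ring

lemma integrable_envelope (hc : 0 < c) (hβ : 0 < β) (K : ℝ) :
    Integrable (envelope (n := n) c β K) := by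
  refine Integrable.fintype_prod
    (f := fun _ x => (x⁺ ^ (β - 1) + x⁺ ^ β) * exp (-(c * x ^ 2) + K * |x|)) fun _ => ?_
  simp only [add_mul]
  exact (integrable_posPart_rpow_mul_exp hc (by linarith) K).add
    (integrable_posPart_rpow_mul_exp hc (by linarith) K)

lemma integrable_weight (hc : 0 < c) (hβ : 0 < β) (s : ℝ) :
    Integrable (weight (n := n) c β s) := by
  refine (integrable_comp_sub_left _ fun _ => s).1 <|
    (integrable_envelope hc hβ (2 * c * |s| + n ^ 2 * β)).mono'
      ((continuous_weight hβ.le s).comp (by fun_prop)).aestronglyMeasurable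
      (ae_of_all _ fun ν => ?_)
  rw [norm_of_nonneg (weight_nonneg _ _)]
  exact weight_sub_le_envelope hc.le hβ.le le_rfl ν

lemma integrable_weightDeriv (hc : 0 < c) (hβ : 0 < β) (s : ℝ) :
    Integrable (weightDeriv (n := n) c β s) :=
  (integrable_comp_sub_left _ fun _ => s).1 <|
    ((integrable_envelope hc hβ (2 * c * |s| + n ^ 2 * β)).const_mul (n * β)).mono'
      ((measurable_weightDeriv_uncurry.comp (by fun_prop : Measurable fun ν : Fin n → ℝ =>
        (s, fun i => s - ν i))).aestronglyMeasurable)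
      (ae_of_all _ fun ν => abs_weightDeriv_sub_le_envelope hc.le hβ le_rfl ν)

lemma continuous_integral_weightDeriv (hc : 0 < c) (hβ : 0 < β) :
    Continuous fun s => ∫ l : Fin n → ℝ, weightDeriv c β s l := by
  have hreflect : (fun s => ∫ l : Fin n → ℝ, weightDeriv c β s l) =
      fun s => ∫ ν : Fin n → ℝ, weightDeriv c β s fun i => s - ν i :=
    funext fun s => (integral_sub_left_eq_self _ volume fun _ => s).symm
  rw [hreflect]
  refine continuous_iff_continuousAt.2 fun s₀ => continuousAt_of_dominated
    (bound := fun ν => n * β * envelope c β (2 * c * (|s₀| + 1) + n ^ 2 * β) ν)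
    (Eventually.of_forall fun s => (measurable_weightDeriv_uncurry.comp
      (by fun_prop : Measurable fun ν : Fin n → ℝ => (s, fun i => s - ν i))).aestronglyMeasurable)
    ?_ ((integrable_envelope hc hβ _).const_mul _) (ae_of_all _ fun ν => ?_)
  · filter_upwards [Metric.ball_mem_nhds s₀ one_pos] with s hs
    refine ae_of_all _ fun ν => abs_weightDeriv_sub_le_envelope hc.le hβ ?_ ν
    rw [Metric.mem_ball, Real.dist_eq] at hs
    linarith [abs_sub_abs_le_abs_sub s s₀]
  · simp only [weightDeriv, weight, sub_sub_cancel]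
    have := continuous_gaussianEnsembleWeight (n := n) (c := c) hβ.le
    exact Continuous.continuousAt (by fun_prop)

lemma hasDerivAt_weight (l : Fin n → ℝ) {s : ℝ} (hs : s ∉ Set.range l) :
    HasDerivAt (fun s => weight c β s l) (weightDeriv c β s l) s := by
  rw [weightDeriv, weight, ← mul_assoc]
  exact (hasDerivAt_prod_posPart_sub_rpow β l hs).mul_const _

lemma intervalIntegral_weightDeriv (hβ : 0 ≤ β) (l : Fin n → ℝ) {a b : ℝ}
    (hint : IntervalIntegrable (fun s => weightDeriv c β s l) volume a b) :
    ∫ s in a..b, weightDeriv c β s l = weight c β b l - weight c β a l :=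
  integral_eq_of_hasDerivAt_off_countable _ _ (Set.countable_range l)
    (continuous_weight_left hβ l).continuousOn (fun _ hs => hasDerivAt_weight l hs.2) hint

lemma integral_weight_sub_integral_weight (hc : 0 < c) (hβ : 0 < β) (a b : ℝ) :
    (∫ l : Fin n → ℝ, weight c β b l) - ∫ l : Fin n → ℝ, weight c β a l =
      ∫ s in a..b, ∫ l : Fin n → ℝ, weightDeriv c β s l := by
  have hprod : Integrable (Function.uncurry fun s l => weightDeriv (n := n) c β s l)
      ((volume.restrict (Set.uIoc a b)).prod volume) := by
    refine (integrable_prod_iff measurable_weightDeriv_uncurry.aestronglyMeasurable).2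
      ⟨ae_of_all _ fun s => integrable_weightDeriv hc hβ s, ?_⟩
    simp only [norm_of_nonneg (weightDeriv_nonneg hβ _ _)]
    exact (continuous_integral_weightDeriv hc hβ).integrableOn_uIoc
  rw [← integral_sub (integrable_weight (n := n) hc hβ b) (integrable_weight hc hβ a),
    intervalIntegral_integral_swap hprod]
  refine integral_congr_ae ?_
  -- Fubini supplies the integrability in `s` needed for the fundamental theorem of calculus,
  -- for almost every `l`.
  filter_upwards [hprod.prod_left_ae] with l hl
  exact (intervalIntegral_weightDeriv hβ.le l (intervalIntegrable_iff.2 hl)).symm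

lemma hasDerivAt_integral_weight (hc : 0 < c) (hβ : 0 < β) (a : ℝ) :
    HasDerivAt (fun s => ∫ l : Fin n → ℝ, weight c β s l)
      (∫ l : Fin n → ℝ, weightDeriv c β a l) a := by
  have hrepr : (fun s => ∫ l : Fin n → ℝ, weight c β s l) = fun s =>
      (∫ l : Fin n → ℝ, weight c β a l) + ∫ u in a..s, ∫ l : Fin n → ℝ, weightDeriv c β u l := by
    ext s
    rw [← integral_weight_sub_integral_weight hc hβ a s, add_sub_cancel]
  rw [hrepr]
  exact ((continuous_integral_weightDeriv (n := n) hc hβ).integral_hasStrictDerivAt a a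
    ).hasDerivAt.const_add _

lemma integral_weight_pos (hc : 0 < c) (hβ : 0 < β) (s : ℝ) :
    0 < ∫ l : Fin n → ℝ, weight c β s l := by
  rw [integral_pos_iff_support_of_nonneg (weight_nonneg s) (integrable_weight hc hβ s)]
  refine (continuous_weight hβ.le s).isOpen_support.measure_pos _ ⟨fun i => s - 1 - i, ?_⟩
  refine (mul_pos (prod_pos fun i _ => rpow_pos_of_pos ?_ _) (mul_pos
    (prod_pos fun _ _ => exp_pos _) (prod_pos fun i _ => prod_pos fun j hj => ?_))).ne'
  · simp only [show s - (s - 1 - (i : ℝ)) = 1 + i by ring]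
    rw [posPart_eq_self.2 (by positivity)]
    positivity
  · have hij : (i : ℝ) < j := by exact_mod_cast mem_Ioi.1 hj
    exact rpow_pos_of_pos (abs_pos.2 (by linarith)) _

end HardWall

open HardWall

section WallPartitionFunction

variable {N : ℕ} {β : ℝ}

lemma measurableSet_setOf_forall_le (a : ℝ) :
    MeasurableSet {l : Fin (N - 1) → ℝ | ∀ i, l i ≤ a} := by
  measurability

lemma indicator_wallWeight (hβ : β ≠ 0) (t a : ℝ) :
    {l : Fin (N - 1) → ℝ | ∀ i, l i ≤ a}.indicator (wallWeight N β t a) =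
      weight (N * β / (4 * t)) β a := by
  ext l
  by_cases hl : ∀ i, l i ≤ a
  · have hexp (x : ℝ) : -(N * β * x ^ 2) / (4 * t) = -(N * β / (4 * t) * x ^ 2) := by ring
    simp only [Set.indicator_of_mem (show l ∈ {l | ∀ i, l i ≤ a} from hl), wallWeight, weight,
      gaussianEnsembleWeight, prod_mul_distrib, hexp, posPart_eq_self.2 (sub_nonneg.2 (hl _))]
    ring
  · simp only [not_forall, not_le] at hl
    obtain ⟨i, hi⟩ := hl
    rw [Set.indicator_of_notMem (fun h => (h i).not_gt hi), weight,
      prod_eq_zero (mem_univ i) (posPart_rpow_eq_zero_of_nonpos hβ (by linarith)), zero_mul]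

lemma wallZ_eq_integral_weight (hβ : β ≠ 0) (t a : ℝ) :
    wallZ N β t a = ∫ l : Fin (N - 1) → ℝ, weight (N * β / (4 * t)) β a l := by
  rw [wallZ, ← integral_indicator (measurableSet_setOf_forall_le a), indicator_wallWeight hβ]

lemma integral_wallMeasure (hβ : 0 < β) (t a : ℝ) (g : (Fin (N - 1) → ℝ) → ℝ) :
    ∫ l, g l ∂wallMeasure N β t a =
      (∫ l, weight (N * β / (4 * t)) β a l * g l) / wallZ N β t a := by
  set T := {l : Fin (N - 1) → ℝ | ∀ i, l i ≤ a}
  have hZ : 0 ≤ wallZ N β t a := by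
    rw [wallZ_eq_integral_weight hβ.ne']
    exact integral_nonneg (weight_nonneg a)
  have hw (l : Fin (N - 1) → ℝ) (hl : l ∈ T) :
      wallWeight N β t a l = weight (N * β / (4 * t)) β a l := by
    rw [← indicator_wallWeight hβ.ne', Set.indicator_of_mem hl]
  rw [wallMeasure, integral_withDensity_eq_integral_toReal_smul (by unfold wallWeight; fun_prop)
    (ae_of_all _ fun _ => ENNReal.ofReal_lt_top), ← integral_div,
    ← integral_indicator (measurableSet_setOf_forall_le a)]
  congr 1
  ext l
  by_cases hl : l ∈ T
  · rw [Set.indicator_of_mem hl, hw l hl,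
      ENNReal.toReal_ofReal (div_nonneg (weight_nonneg a l) hZ), smul_eq_mul]
    ring
  · rw [Set.indicator_of_notMem hl, ← indicator_wallWeight hβ.ne', Set.indicator_of_notMem hl,
      zero_mul, zero_div]

end WallPartitionFunction

/-- `a ↦ ln Z(a)` is differentiable on ℝ with
`(ln Z)'(a) = β · E_a[Σᵢ 1/(a - λᵢ)]`. -/
theorem log_wallZ_hasDerivAt (N : ℕ) (hN : 2 ≤ N) (β t : ℝ) (hβ : 0 < β) (ht : 0 < t)
    (a : ℝ) :
    HasDerivAt (fun a' : ℝ => Real.log (wallZ N β t a'))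
      (β * ∫ l, (∑ i, (a - l i)⁻¹) ∂wallMeasure N β t a) a := by
  have hc : 0 < N * β / (4 * t) := by
    have : (0 : ℝ) < N := by exact_mod_cast (by omega : 0 < N)
    positivity
  have hmean : β * ∫ l, (∑ i, (a - l i)⁻¹) ∂wallMeasure N β t a =
      (∫ l : Fin (N - 1) → ℝ, weightDeriv (N * β / (4 * t)) β a l) / wallZ N β t a := by
    simp only [integral_wallMeasure hβ, weightDeriv, mul_div_assoc', ← integral_const_mul]
    congr 1
    exact integral_congr_ae (ae_of_all _ fun l => by ring)
  simp only [hmean, wallZ_eq_integral_weight hβ.ne' t]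
  exact (hasDerivAt_integral_weight hc hβ a).log (integral_weight_pos hc hβ a).ne'
end

section
/- Fix an integer N ≥ 2 and reals β > 0, t > 0, and let Z(a) = ∫_{(−∞,a]^{N−1}} ∏_{i=1}^{N−1} exp(−Nβλ_i²/(4t)) (a−λ_i)^β · ∏_{1≤i<j≤N−1} |λ_i−λ_j|^β dλ. Then lim_{a→+∞} Z(a)/a^{(N−1)β} = ∫_{ℝ^{N−1}} ∏_{i=1}^{N−1} exp(−Nβλ_i²/(4t)) · ∏_{1≤i<j≤N−1} |λ_i−λ_j|^β dλ; in particular Z(a) ∼ a^{(N−1)β} Z_∞ as a → +∞, where Z_∞ denotes the right-hand side. -/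
open MeasureTheory Filter
open Topology
set_option maxHeartbeats 1000000

private lemma wall_phi_integrable (c β : ℝ) (P : ℕ) (hc : 0 < c) (hβ : 0 ≤ β) :
    Integrable (fun x : ℝ => Real.exp (-(c * x ^ 2)) * (1 + |x|) ^ β *
      ((1 + |x|) ^ β) ^ P) := by
  set Q : ℝ := β * (P + 1) with hQdef
  have hQ0 : 0 ≤ Q := by positivity
  refine Integrable.mono' (g := fun x => Real.exp (Q ^ 2 / (2 * c)) * Real.exp (-(c/2) * x ^ 2))
    ((integrable_exp_neg_mul_sq (b := c/2) (by linarith)).const_mul _) ?_ ?_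
  · apply Measurable.aestronglyMeasurable; fun_prop
  · filter_upwards with x
    have h1 : (0:ℝ) < 1 + |x| := by positivity
    have hle : (1 + |x|) ^ β ≤ Real.exp (β * |x|) := by
      calc (1 + |x|) ^ β ≤ (Real.exp |x|) ^ β :=
            Real.rpow_le_rpow (by positivity) (by linarith [Real.add_one_le_exp |x|]) hβ
        _ = Real.exp (|x| * β) := by rw [← Real.exp_mul]
        _ = Real.exp (β * |x|) := by rw [mul_comm]
    have hleP : ((1 + |x|) ^ β) ^ P ≤ Real.exp (P * (β * |x|)) := by
      calc ((1 + |x|) ^ β) ^ P ≤ (Real.exp (β * |x|)) ^ P :=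
            pow_le_pow_left₀ (by positivity) hle P
        _ = Real.exp (P * (β * |x|)) := by rw [← Real.exp_nat_mul]
    have hnn : 0 ≤ Real.exp (-(c * x ^ 2)) * (1 + |x|) ^ β * ((1 + |x|) ^ β) ^ P := by
      positivity
    rw [Real.norm_eq_abs, abs_of_nonneg hnn]
    calc Real.exp (-(c * x ^ 2)) * (1 + |x|) ^ β * ((1 + |x|) ^ β) ^ P
        ≤ Real.exp (-(c * x ^ 2)) * Real.exp (β * |x|) * Real.exp (P * (β * |x|)) := by
          apply mul_le_mul (mul_le_mul_of_nonneg_left hle (by positivity)) hleP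
            (by positivity) (by positivity)
      _ = Real.exp (-(c * x ^ 2) + β * |x| + P * (β * |x|)) := by
          rw [← Real.exp_add, ← Real.exp_add]
      _ ≤ Real.exp (Q ^ 2 / (2 * c) + -(c/2) * x ^ 2) := by
          apply Real.exp_le_exp.2
          have hq : β * |x| + ↑P * (β * |x|) = Q * |x| := by rw [hQdef]; ring
          have h2c : (0:ℝ) < 2 * c := by linarith
          have key : 2 * c * (Q * |x|) ≤ Q ^ 2 + c ^ 2 * x ^ 2 := by
            nlinarith [sq_nonneg (Q - c * |x|), sq_abs x]
          have hdiv : Q ^ 2 / (2 * c) * (2 * c) = Q ^ 2 := div_mul_cancel₀ _ (ne_of_gt h2c)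
          nlinarith [key, hdiv, hc]
      _ = Real.exp (Q ^ 2 / (2 * c)) * Real.exp (-(c/2) * x ^ 2) := Real.exp_add _ _

private lemma wall_pow_eq (N : ℕ) (hN : 2 ≤ N) (β : ℝ) {a : ℝ} (ha : 0 < a) :
    a ^ (((N : ℝ) - 1) * β) = ∏ _i : Fin (N - 1), a ^ β := by
  have h1 : ((N - 1 : ℕ) : ℝ) = (N : ℝ) - 1 := by
    rw [Nat.cast_sub (by omega : 1 ≤ N)]; norm_num
  rw [Finset.prod_const, Finset.card_univ, Fintype.card_fin, ← h1, mul_comm,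
    Real.rpow_mul ha.le, Real.rpow_natCast]


set_option maxHeartbeats 1000000 in
/-- `Z(a)/a^{(N-1)β} → Z_∞` as `a → +∞`, where `Z_∞` is the Gaussian
β-ensemble partition function of `N - 1` eigenvalues with weight `exp(-Nβλ²/(4t))`;
in particular `Z(a) ∼ a^{(N-1)β} Z_∞`. -/
theorem wallZ_asymptotic (N : ℕ) (hN : 2 ≤ N) (β t : ℝ) (hβ : 0 < β) (ht : 0 < t) :
    Tendsto (fun a : ℝ => wallZ N β t a / a ^ (((N : ℝ) - 1) * β)) atTop
      (nhds (∫ l : Fin (N - 1) → ℝ,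
        (∏ i, Real.exp (-(N * β * (l i) ^ 2) / (4 * t))) *
          ∏ i, ∏ j ∈ Finset.Ioi i, |l i - l j| ^ β)) := by
  have hNpos : (0:ℝ) < N := by positivity
  set c : ℝ := N * β / (4 * t) with hcdef
  have hc : 0 < c := by positivity
  set P : ℕ := ∑ i : Fin (N - 1), (Finset.Ioi i).card with hPdef
  set φ : ℝ → ℝ := fun x => Real.exp (-(c * x ^ 2)) * (1 + |x|) ^ β *
      ((1 + |x|) ^ β) ^ P with hφdef
  set g : (Fin (N - 1) → ℝ) → ℝ := fun l => ∏ i, φ (l i) with hgdef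
  have hexp : ∀ x : ℝ, Real.exp (-(N * β * x ^ 2) / (4 * t)) = Real.exp (-(c * x ^ 2)) := by
    intro x
    congr 1
    rw [hcdef]
    field_simp
  have hg_int : Integrable g := Integrable.fintype_prod
    (f := fun (_ : Fin (N - 1)) => φ) fun _ => wall_phi_integrable c β P hc hβ.le
  have hS : ∀ a : ℝ, MeasurableSet {l : Fin (N - 1) → ℝ | ∀ i, l i ≤ a} := by
    intro a
    have : {l : Fin (N - 1) → ℝ | ∀ i, l i ≤ a} = ⋂ i, (fun l : Fin (N-1) → ℝ => l i) ⁻¹' Set.Iic a := by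
      ext l; simp [Set.mem_iInter]
    rw [this]
    exact MeasurableSet.iInter fun i => (measurable_pi_apply i) measurableSet_Iic
  have hw_meas : ∀ a : ℝ, Measurable (wallWeight N β t a) := by
    intro a
    unfold wallWeight
    fun_prop
  set F : ℝ → (Fin (N - 1) → ℝ) → ℝ := fun a l =>
    Set.indicator {l : Fin (N - 1) → ℝ | ∀ i, l i ≤ a} (wallWeight N β t a) l
      / a ^ (((N : ℝ) - 1) * β) with hFdef
  have hZ : ∀ a : ℝ, wallZ N β t a / a ^ (((N : ℝ) - 1) * β) = ∫ l, F a l := by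
    intro a
    rw [hFdef, integral_div, integral_indicator (hS a), wallZ]
  -- nonnegativity helpers
  have hφ_nonneg : ∀ x, 0 ≤ φ x := fun x => by rw [hφdef]; positivity
  have hg_nonneg : ∀ l, 0 ≤ g l := fun l => Finset.prod_nonneg fun i _ => hφ_nonneg (l i)
  -- the bound
  have h_bound : ∀ᶠ a in atTop, ∀ᵐ l : Fin (N - 1) → ℝ, ‖F a l‖ ≤ g l := by
    filter_upwards [eventually_ge_atTop (1:ℝ)] with a ha
    refine Filter.Eventually.of_forall fun l => ?_
    have ha0 : (0:ℝ) < a := lt_of_lt_of_le one_pos ha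
    by_cases hl : l ∈ {l : Fin (N - 1) → ℝ | ∀ i, l i ≤ a}
    · rw [hFdef]
      simp only [Set.indicator_of_mem hl]
      have hl' : ∀ i, l i ≤ a := hl
      have hapow : (0:ℝ) < a ^ (((N : ℝ) - 1) * β) := Real.rpow_pos_of_pos ha0 _
      have hw_nonneg : 0 ≤ wallWeight N β t a l := by
        unfold wallWeight
        apply mul_nonneg
        · exact Finset.prod_nonneg fun i _ => mul_nonneg (Real.exp_nonneg _)
            (Real.rpow_nonneg (sub_nonneg.2 (hl' i)) _)
        · exact Finset.prod_nonneg fun i _ => Finset.prod_nonneg fun j _ =>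
            Real.rpow_nonneg (abs_nonneg _) _
      rw [Real.norm_eq_abs, abs_of_nonneg (div_nonneg hw_nonneg hapow.le)]
      rw [div_le_iff₀ hapow]
      -- key inequality
      have hX : (∏ i, Real.exp (-(N * β * (l i) ^ 2) / (4 * t)) * (a - l i) ^ β)
          ≤ ∏ i, Real.exp (-(N * β * (l i) ^ 2) / (4 * t)) * ((1 + |l i|) ^ β * a ^ β) := by
        refine Finset.prod_le_prod (fun i _ => mul_nonneg (Real.exp_nonneg _)
          (Real.rpow_nonneg (sub_nonneg.2 (hl' i)) _)) fun i _ => ?_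
        refine mul_le_mul_of_nonneg_left ?_ (Real.exp_nonneg _)
        have h1 : a - l i ≤ a * (1 + |l i|) := by
          nlinarith [abs_nonneg (l i), neg_abs_le (l i)]
        calc (a - l i) ^ β ≤ (a * (1 + |l i|)) ^ β :=
              Real.rpow_le_rpow (sub_nonneg.2 (hl' i)) h1 hβ.le
          _ = (1 + |l i|) ^ β * a ^ β := by
              rw [Real.mul_rpow ha0.le (by positivity), mul_comm]
      have hV : (∏ i, ∏ j ∈ Finset.Ioi i, |l i - l j| ^ β)
          ≤ ∏ i, ((1 + |l i|) ^ β) ^ P := by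
        calc (∏ i, ∏ j ∈ Finset.Ioi i, |l i - l j| ^ β)
            ≤ ∏ i : Fin (N-1), ∏ _j ∈ Finset.Ioi i, ∏ k, (1 + |l k|) ^ β := by
              refine Finset.prod_le_prod (fun i _ => Finset.prod_nonneg fun j _ =>
                Real.rpow_nonneg (abs_nonneg _) _) fun i _ => ?_
              refine Finset.prod_le_prod (fun j _ => Real.rpow_nonneg (abs_nonneg _) _)
                fun j hj => ?_
              have hij : i < j := Finset.mem_Ioi.1 hj
              have h1 : |l i - l j| ≤ (1 + |l i|) * (1 + |l j|) := by
                have := abs_sub (l i) (l j)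
                nlinarith [abs_nonneg (l i), abs_nonneg (l j)]
              have h2 : (1 + |l i|) * (1 + |l j|) = ∏ k ∈ ({i, j} : Finset (Fin (N-1))), (1 + |l k|) :=
                (Finset.prod_pair (f := fun k => 1 + |l k|) hij.ne).symm
              have h3 : (∏ k ∈ ({i, j} : Finset (Fin (N-1))), (1 + |l k|)) ≤ ∏ k, (1 + |l k|) := by
                have hite := Finset.prod_ite_mem Finset.univ ({i, j} : Finset (Fin (N-1)))
                  (fun k => 1 + |l k|)
                rw [Finset.univ_inter] at hite
                rw [← hite]
                refine Finset.prod_le_prod (fun k _ => ?_) (fun k _ => ?_)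
                · split_ifs <;> positivity
                · split_ifs with h
                  · exact le_refl _
                  · linarith [abs_nonneg (l k)]
              calc |l i - l j| ^ β ≤ (∏ k, (1 + |l k|)) ^ β :=
                    Real.rpow_le_rpow (abs_nonneg _) (h1.trans (h2 ▸ h3)) hβ.le
                _ = ∏ k, (1 + |l k|) ^ β :=
                    (Real.finset_prod_rpow _ _ (fun k _ => by positivity) _).symm
          _ = ∏ i : Fin (N-1), (∏ k, (1 + |l k|) ^ β) ^ (Finset.Ioi i).card := by
              simp [Finset.prod_const]
          _ = (∏ k, (1 + |l k|) ^ β) ^ P := by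
              rw [Finset.prod_pow_eq_pow_sum, hPdef]
          _ = ∏ i, ((1 + |l i|) ^ β) ^ P := (Finset.prod_pow _ _ _).symm
      have hV_nonneg : 0 ≤ ∏ i, ∏ j ∈ Finset.Ioi i, |l i - l j| ^ β :=
        Finset.prod_nonneg fun i _ => Finset.prod_nonneg fun j _ =>
          Real.rpow_nonneg (abs_nonneg _) _
      have hX'_nonneg : 0 ≤ ∏ i, Real.exp (-(N * β * (l i) ^ 2) / (4 * t)) * ((1 + |l i|) ^ β * a ^ β) :=
        Finset.prod_nonneg fun i _ => by positivity
      calc wallWeight N β t a l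
          ≤ (∏ i, Real.exp (-(N * β * (l i) ^ 2) / (4 * t)) * ((1 + |l i|) ^ β * a ^ β)) *
            (∏ i, ((1 + |l i|) ^ β) ^ P) := by
            unfold wallWeight
            exact mul_le_mul hX hV hV_nonneg hX'_nonneg
        _ = g l * a ^ (((N : ℝ) - 1) * β) := by
            rw [wall_pow_eq N hN β ha0, hgdef]
            simp only [hφdef, hexp]
            rw [← Finset.prod_mul_distrib, ← Finset.prod_mul_distrib]
            apply Finset.prod_congr rfl
            intro i _
            ring
    · rw [hFdef]
      simp only [Set.indicator_of_notMem hl]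
      simpa using hg_nonneg l
  -- pointwise limit
  have h_lim : ∀ l : Fin (N - 1) → ℝ, Tendsto (fun a => F a l) atTop
      (𝓝 ((∏ i, Real.exp (-(N * β * (l i) ^ 2) / (4 * t))) *
          ∏ i, ∏ j ∈ Finset.Ioi i, |l i - l j| ^ β)) := by
    intro l
    have hev : ∀ᶠ a in atTop, (∀ i, l i ≤ a) ∧ (1:ℝ) ≤ a :=
      (eventually_all.2 fun i => eventually_ge_atTop (l i)).and (eventually_ge_atTop 1)
    have htend : Tendsto (fun a : ℝ =>
        (∏ i, Real.exp (-(N * β * (l i) ^ 2) / (4 * t)) * (1 - l i / a) ^ β) *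
          ∏ i, ∏ j ∈ Finset.Ioi i, |l i - l j| ^ β) atTop
        (𝓝 ((∏ i, Real.exp (-(N * β * (l i) ^ 2) / (4 * t))) *
          ∏ i, ∏ j ∈ Finset.Ioi i, |l i - l j| ^ β)) := by
      have h1 : ∀ i : Fin (N - 1), Tendsto (fun a : ℝ =>
          Real.exp (-(N * β * (l i) ^ 2) / (4 * t)) * (1 - l i / a) ^ β) atTop
          (𝓝 (Real.exp (-(N * β * (l i) ^ 2) / (4 * t)))) := by
        intro i
        have h0 : Tendsto (fun a : ℝ => 1 - l i / a) atTop (𝓝 1) := by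
          have := (tendsto_const_nhds (x := l i) (f := atTop (α := ℝ))).div_atTop tendsto_id
          simpa using tendsto_const_nhds.sub this
        have h0' : Tendsto (fun a : ℝ => (1 - l i / a) ^ β) atTop (𝓝 1) := by
          have := h0.rpow_const (p := β) (Or.inr hβ.le)
          simpa [Real.one_rpow] using this
        simpa using tendsto_const_nhds.mul h0'
      have := Tendsto.mul_const (∏ i, ∏ j ∈ Finset.Ioi i, |l i - l j| ^ β)
        (tendsto_finset_prod Finset.univ (fun i _ => h1 i))
      simpa using this
    refine Tendsto.congr' ?_ htend
    filter_upwards [hev] with a ⟨h1, h2⟩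
    have ha0 : (0:ℝ) < a := lt_of_lt_of_le one_pos h2
    rw [hFdef]
    simp only [Set.indicator_of_mem (show l ∈ {l : Fin (N-1) → ℝ | ∀ i, l i ≤ a} from h1)]
    unfold wallWeight
    rw [mul_div_right_comm, wall_pow_eq N hN β ha0, ← Finset.prod_div_distrib]
    congr 1
    apply Finset.prod_congr rfl
    intro i _
    rw [mul_div_assoc, ← Real.div_rpow (sub_nonneg.2 (h1 i)) ha0.le, sub_div,
      div_self ha0.ne']
  -- assemble
  have dct := tendsto_integral_filter_of_dominated_convergence (μ := volume)
    (F := F) g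
    (Filter.Eventually.of_forall fun a =>
      (((hw_meas a).indicator (hS a)).div_const _).aestronglyMeasurable)
    h_bound hg_int
    (Filter.Eventually.of_forall h_lim)
  exact Tendsto.congr (fun a => (hZ a).symm) dct
end

section
/- Let q : ℝ → ℝ be twice differentiable and satisfy the Painlevé II equation q''(s) = 2 q(s)³ + s q(s) for all s ∈ ℝ. Assume that q² is integrable on [s₀, ∞) for some s₀ and that q'(s)² − s q(s)² − q(s)⁴ → 0 as s → +∞. Then for every s ∈ ℝ, ∫_s^∞ q(t)² dt = q'(s)² − s q(s)² − q(s)⁴. -/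
open MeasureTheory Filter Set

/-! The energy `R(s) = q'(s)² - s q(s)² - q(s)⁴` of a Painlevé II solution satisfies
`R' = 2 q' q'' - q² - 2 s q q' - 4 q³ q' = -q²` once `q'' = 2 q³ + s q` is substituted, so the claim
is the fundamental theorem of calculus on `[s, ∞)` with `R(+∞) = 0`. -/

def painleveIIEnergy (q q' : ℝ → ℝ) (s : ℝ) : ℝ :=
  q' s ^ 2 - s * q s ^ 2 - q s ^ 4

theorem hasDerivAt_painleveIIEnergy {q q' : ℝ → ℝ} {s : ℝ}
    (hq : HasDerivAt q (q' s) s) (hq' : HasDerivAt q' (2 * q s ^ 3 + s * q s) s) :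
    HasDerivAt (painleveIIEnergy q q') (-(q s ^ 2)) s := by
  have h := ((hq'.fun_pow 2).fun_sub ((hasDerivAt_id s).fun_mul (hq.fun_pow 2))).fun_sub
    (hq.fun_pow 4)
  refine h.congr_deriv ?_
  simp only [id_eq, Nat.cast_ofNat]
  ring

theorem Continuous.integrableOn_Ioi_of_integrableOn_Ici {E : Type*} [NormedAddCommGroup E]
    {f : ℝ → E} (hf : Continuous f) {a : ℝ} (ha : IntegrableOn f (Ici a)) (b : ℝ) :
    IntegrableOn f (Ioi b) := by
  have hcover : Ioi b ⊆ Icc b a ∪ Ici a := fun x hx =>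
    (le_total x a).imp (fun hxa => ⟨le_of_lt hx, hxa⟩) id
  exact ((hf.continuousOn.integrableOn_compact isCompact_Icc).union ha).mono_set hcover

/-- if `q` solves Painlevé II, `q²` is integrable at `+∞` and
`R(s) = q'(s)² - s q(s)² - q(s)⁴ → 0` as `s → +∞`, then
`∫_s^∞ q(t)² dt = q'(s)² - s q(s)² - q(s)⁴` for every `s`. -/
theorem painleveII_tail_integral (q q' : ℝ → ℝ)
    (hq : ∀ s, HasDerivAt q (q' s) s)
    (hq' : ∀ s, HasDerivAt q' (2 * q s ^ 3 + s * q s) s)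
    (s₀ : ℝ) (hint : IntegrableOn (fun u => q u ^ 2) (Set.Ici s₀))
    (hlim : Tendsto (fun s => q' s ^ 2 - s * q s ^ 2 - q s ^ 4) atTop (nhds 0)) :
    ∀ s : ℝ, ∫ u in Set.Ioi s, q u ^ 2 = q' s ^ 2 - s * q s ^ 2 - q s ^ 4 := by
  intro s
  have hcont : Continuous q := continuous_iff_continuousAt.mpr fun t => (hq t).continuousAt
  have hftc := integral_Ioi_of_hasDerivAt_of_tendsto'
    (fun t _ => hasDerivAt_painleveIIEnergy (hq t) (hq' t))
    ((hcont.pow 2).integrableOn_Ioi_of_integrableOn_Ici hint s).neg hlim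
  rw [integral_neg] at hftc
  simp only [painleveIIEnergy] at hftc
  linarith
end

section
/- Let q : ℝ → ℝ be twice continuously differentiable with q''(s) = 2 q(s)³ + s q(s) for all s, and with the Hastings–McLeod normalization lim_{s→+∞} 2√π · s^{1/4} · e^{(2/3) s^{3/2}} · q(s) = 1. Then as s → +∞, ∫_s^∞ q(t) dt = ( e^{−(2/3) s^{3/2}} / (2√π s^{3/4}) ) · ( 1 − (41/48) s^{−3/2} + (9241/4608) s^{−3} + O(s^{−9/2}) ); that is, there exist constants C > 0 and s₀ such that for all s ≥ s₀ the difference between ∫_s^∞ q(t) dt and the three displayed terms is at most C · e^{−(2/3) s^{3/2}} · s^{−3/4} · s^{−9/2}. -/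
/-!
Put `ξ = (2/3) s^{3/2}`, `c = 1/(2√π)` and let `m = c e^{-ξ} s^{-1/4} (1 - (5/48) s^{-3/2} +
(385/4608) s^{-3})` be the three-term asymptotic expansion of `Ai`, so that
`m'' - s m = r = O(e^{-ξ} s^{-21/4})` and `h = q - m` solves `h'' = s h + 2 q³ - r`.
Reduction of order against the growing WKB solution `φ = e^{ξ} s^{-1/4}`, which satisfies
`φ'' = s φ + (5/16) s^{-2} φ`: the Wronskian `W = φ h' - φ' h` has
`W' = φ (2 q³ - r) - (5/16) s^{-2} φ h`, and `(h / φ)' = W / φ²`.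
The normalization says `h = o(e^{-ξ} s^{-1/4})`; this forces `W → 0`, so that
`W(s) = -∫_s^∞ W'` and `h(s) = -φ(s) ∫_s^∞ W / φ²`. Fed through these two integrals, a bound
`h = O(e^{-ξ} s^{-1/4-α})` improves to `h = O(e^{-ξ} s^{-7/4-α})` as long as `α ≤ 3`, and three
rounds give `h = O(e^{-ξ} s^{-19/4})`. Finally
`A = c e^{-ξ} s^{-3/4} (1 - (41/48) s^{-3/2} + (9241/4608) s^{-3})` has
`A' = -m + O(e^{-ξ} s^{-19/4})`, hence `∫_s^∞ q - A(s) = ∫_s^∞ (q + A') = O(e^{-ξ} s^{-21/4})`.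
-/

open MeasureTheory Filter Real Set Topology Asymptotics

section TailIntegrals

variable {E : Type*} [NormedAddCommGroup E] [NormedSpace ℝ E] {C : ℝ} {f : ℝ → E} {g : ℝ → ℝ}

theorem Asymptotics.IsBigOWith.integral_Ioi (h : IsBigOWith C atTop f g)
    (hg : ∀ᶠ s in atTop, IntegrableOn g (Ioi s)) (hg0 : ∀ᶠ u in atTop, 0 ≤ g u) :
    IsBigOWith C atTop (fun s => ∫ u in Ioi s, f u) (fun s => ∫ u in Ioi s, g u) := by
  rw [isBigOWith_iff] at h ⊢
  have hpt : ∀ᶠ s : ℝ in atTop, ∀ u ≥ s, 0 ≤ g u ∧ ‖f u‖ ≤ C * g u :=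
    eventually_forall_ge_atTop.2 <| by
      filter_upwards [h, hg0] with u hu hu0
      rw [norm_of_nonneg hu0] at hu
      exact ⟨hu0, hu⟩
  filter_upwards [hpt, hg] with s hs hgs
  have hs' : ∀ᵐ u ∂volume.restrict (Ioi s), 0 ≤ g u ∧ ‖f u‖ ≤ C * g u := by
    filter_upwards [ae_restrict_mem measurableSet_Ioi] with u hu using hs u (le_of_lt hu)
  rw [norm_of_nonneg (setIntegral_nonneg_of_ae_restrict (hs'.mono fun _ => And.left)),
    ← integral_const_mul]
  exact norm_integral_le_of_norm_le (hgs.const_mul C) (hs'.mono fun _ => And.right)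

theorem Asymptotics.IsBigO.integral_Ioi (h : f =O[atTop] g)
    (hg : ∀ᶠ s in atTop, IntegrableOn g (Ioi s)) (hg0 : ∀ᶠ u in atTop, 0 ≤ g u) :
    (fun s => ∫ u in Ioi s, f u) =O[atTop] fun s => ∫ u in Ioi s, g u :=
  let ⟨_, hC⟩ := h.isBigOWith
  (hC.integral_Ioi hg hg0).isBigO

theorem Asymptotics.IsLittleO.integral_Ioi (h : f =o[atTop] g)
    (hg : ∀ᶠ s in atTop, IntegrableOn g (Ioi s)) (hg0 : ∀ᶠ u in atTop, 0 ≤ g u) :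
    (fun s => ∫ u in Ioi s, f u) =o[atTop] fun s => ∫ u in Ioi s, g u :=
  isLittleO_iff_forall_isBigOWith.2 fun _ hc => (h.def' hc).integral_Ioi hg hg0

end TailIntegrals

theorem integrableOn_Ioi_of_isBigO {f g : ℝ → ℝ} {s : ℝ} (hf : ContinuousOn f (Ici s))
    (hfg : f =O[atTop] g) (hg : IntegrableAtFilter g atTop) : IntegrableOn f (Ioi s) :=
  ((hf.locallyIntegrableOn measurableSet_Ici).integrableOn_of_isBigO_atTop hfg hg).mono_set
    Ioi_subset_Ici_self

theorem isBigO_rpow_rpow_atTop {a b : ℝ} (hab : a ≤ b) :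
    (fun s : ℝ => s ^ a) =O[atTop] fun s => s ^ b := by
  refine IsBigO.of_bound' ?_
  filter_upwards [eventually_ge_atTop 1] with s hs
  rw [norm_of_nonneg (by positivity), norm_of_nonneg (by positivity)]
  exact rpow_le_rpow_of_exponent_le hs hab

theorem isBigO_integral_Ioi_rpow {a : ℝ} (ha : a < -1) :
    (fun s : ℝ => ∫ u in Ioi s, u ^ a) =O[atTop] fun s => s ^ (a + 1) := by
  refine (isBigO_refl (fun s : ℝ => s ^ (a + 1)) atTop |>.const_mul_left (-(a + 1)⁻¹)).congr' ?_
    EventuallyEq.rfl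
  filter_upwards [eventually_gt_atTop 0] with s hs
  rw [integral_Ioi_rpow_of_lt ha hs]; ring

theorem HasDerivAt.wronskian {f f' g g' : ℝ → ℝ} {f'' g'' x : ℝ} (hf : HasDerivAt f (f' x) x)
    (hf' : HasDerivAt f' f'' x) (hg : HasDerivAt g (g' x) x) (hg' : HasDerivAt g' g'' x) :
    HasDerivAt (fun x => f x * g' x - f' x * g x) (f x * g'' - f'' * g x) x :=
  ((hf.mul hg').sub (hf'.mul hg)).congr_deriv (by ring)

noncomputable section

namespace HastingsMcLeod

def ξ (s : ℝ) : ℝ := 2 / 3 * s ^ ((3 : ℝ) / 2)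

/-- `w 1 a` and `w (-1) a` are the decaying and the growing WKB scales `e^{∓ξ} s^a`. -/
def w (k a s : ℝ) : ℝ := exp (-(k * ξ s)) * s ^ a

section Weights

variable {k l a b s : ℝ}

lemma w_pos (hs : 0 < s) : 0 < w k a s := by
  unfold w; positivity

lemma w_zero_left (a s : ℝ) : w 0 a s = s ^ a := by
  simp [w]

lemma w_mul_w (hs : 0 < s) : w k a s * w l b s = w (k + l) (a + b) s := by
  simp only [w, rpow_add hs, add_mul, neg_add, exp_add]; ring

lemma w_mul_rpow (hs : 0 < s) : w k a s * s ^ b = w k (a + b) s := by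
  rw [← w_zero_left b, w_mul_w hs, add_zero]

lemma mul_w (hs : 0 < s) : s * w k a s = w k (a + 1) s := by
  rw [mul_comm, ← w_mul_rpow hs, rpow_one]

lemma hasDerivAt_ξ (hs : 0 < s) : HasDerivAt ξ (s ^ ((1 : ℝ) / 2)) s := by
  refine ((hasDerivAt_rpow_const (Or.inl hs.ne')).const_mul (2 / 3 : ℝ)).congr_deriv ?_
  norm_num; ring

lemma hasDerivAt_w (hs : 0 < s) :
    HasDerivAt (w k a) (a * w k (a - 1) s - k * w k (a + 1 / 2) s) s := by
  refine ((((hasDerivAt_ξ hs).const_mul k).neg.exp).mul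
    (hasDerivAt_rpow_const (p := a) (Or.inl hs.ne'))).congr_deriv ?_
  simp only [w, rpow_add hs, rpow_sub_one hs.ne', Pi.neg_apply]; ring

lemma continuousAt_w (hs : 0 < s) : ContinuousAt (w k a) s :=
  (hasDerivAt_w hs).continuousAt

lemma continuousOn_w : ContinuousOn (w k a) (Ioi 0) := fun _ hs =>
  (continuousAt_w hs).continuousWithinAt

lemma tendsto_w_atTop (hk : 0 < k) : Tendsto (w k a) atTop (𝓝 0) := by
  refine ((tendsto_rpow_mul_exp_neg_mul_atTop_nhds_zero (2 / 3 * a) (2 / 3 * k)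
    (by positivity)).comp (tendsto_rpow_atTop (by norm_num : (0 : ℝ) < 3 / 2))).congr' ?_
  filter_upwards [eventually_gt_atTop 0] with s hs
  simp only [Function.comp, w, ξ, ← rpow_mul hs.le]
  norm_num; ring_nf

lemma isBigO_w_rpow (hk : 0 < k) (a b : ℝ) : w k a =O[atTop] fun s => s ^ b := by
  refine ((tendsto_w_atTop (a := a - b) hk).isBigO_one ℝ |>.mul
    (isBigO_refl (fun s => s ^ b) _)).congr' ?_ (by simp)
  filter_upwards [eventually_gt_atTop 0] with s hs
  rw [w_mul_rpow hs, sub_add_cancel]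

lemma hasDerivAt_neg_w_zero_div (hk : k ≠ 0) (hs : 0 < s) :
    HasDerivAt (fun u => -w k 0 u / k) (w k (1 / 2) s) s := by
  refine ((hasDerivAt_w (k := k) (a := 0) hs).neg.div_const k).congr_deriv ?_
  field_simp; ring_nf

lemma integrableOn_w_half (hk : 0 < k) (hs : 0 < s) : IntegrableOn (w k (1 / 2)) (Ioi s) :=
  integrableOn_Ioi_deriv_of_nonneg' (fun _ hu => hasDerivAt_neg_w_zero_div hk.ne' (hs.trans_le hu))
    (fun _ hu => (w_pos (hs.trans hu)).le) (by simpa using (tendsto_w_atTop hk).neg.div_const k)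

lemma integral_Ioi_w_half (hk : 0 < k) (hs : 0 < s) :
    ∫ u in Ioi s, w k (1 / 2) u = w k 0 s / k := by
  rw [integral_Ioi_of_hasDerivAt_of_tendsto'
    (fun _ hu => hasDerivAt_neg_w_zero_div hk.ne' (hs.trans_le hu)) (integrableOn_w_half hk hs)
    (by simpa using (tendsto_w_atTop hk).neg.div_const k)]
  ring

lemma w_le_rpow_mul_w (hab : a ≤ b) (hs : 0 < s) {u : ℝ} (hsu : s ≤ u) :
    w k a u ≤ s ^ (a - b) * w k b u := by
  have hu : 0 < u := hs.trans_le hsu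
  calc w k a u = u ^ (a - b) * w k b u := by rw [mul_comm, w_mul_rpow hu, add_sub_cancel]
    _ ≤ s ^ (a - b) * w k b u :=
      mul_le_mul_of_nonneg_right (rpow_le_rpow_of_nonpos hs hsu (by linarith)) (w_pos hu).le

lemma integrableOn_w (hk : 0 < k) (ha : a ≤ 1 / 2) (hs : 0 < s) :
    IntegrableOn (w k a) (Ioi s) := by
  refine ((integrableOn_w_half hk hs).const_mul (s ^ (a - 1 / 2))).mono'
    (continuousOn_w.mono (Ioi_subset_Ioi hs.le) |>.aestronglyMeasurable measurableSet_Ioi) ?_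
  filter_upwards [ae_restrict_mem measurableSet_Ioi] with u hu
  rw [norm_of_nonneg (w_pos (hs.trans hu)).le]
  exact w_le_rpow_mul_w ha hs (le_of_lt hu)

lemma integrableAtFilter_w (hk : 0 < k) (ha : a ≤ 1 / 2) : IntegrableAtFilter (w k a) atTop :=
  ⟨Ioi 1, Ioi_mem_atTop 1, integrableOn_w hk ha one_pos⟩

lemma eventually_integrableOn_w (hk : 0 < k) (ha : a ≤ 1 / 2) :
    ∀ᶠ s in atTop, IntegrableOn (w k a) (Ioi s) :=
  (eventually_gt_atTop 0).mono fun _ hs => integrableOn_w hk ha hs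

lemma eventually_w_nonneg : ∀ᶠ u in atTop, 0 ≤ w k a u :=
  (eventually_gt_atTop 0).mono fun _ hu => (w_pos hu).le

lemma integral_Ioi_w_le (hk : 0 < k) (ha : a ≤ 1 / 2) (hs : 0 < s) :
    ∫ u in Ioi s, w k a u ≤ w k (a - 1 / 2) s / k := by
  calc ∫ u in Ioi s, w k a u ≤ ∫ u in Ioi s, s ^ (a - 1 / 2) * w k (1 / 2) u :=
        setIntegral_mono_on (integrableOn_w hk ha hs)
          ((integrableOn_w_half hk hs).const_mul _) measurableSet_Ioi
          fun u hu => w_le_rpow_mul_w ha hs (le_of_lt hu)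
    _ = w k (a - 1 / 2) s / k := by
      rw [integral_const_mul, integral_Ioi_w_half hk hs, mul_div_assoc', mul_comm,
        w_mul_rpow hs, zero_add]

lemma isBigO_integral_Ioi_w (hk : 0 < k) (ha : a ≤ 1 / 2) :
    (fun s => ∫ u in Ioi s, w k a u) =O[atTop] w k (a - 1 / 2) := by
  refine IsBigO.of_bound k⁻¹ ?_
  filter_upwards [eventually_gt_atTop 0] with s hs
  rw [norm_of_nonneg (setIntegral_nonneg measurableSet_Ioi fun u hu => (w_pos (hs.trans hu)).le),
    norm_of_nonneg (w_pos hs).le, inv_mul_eq_div]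
  exact integral_Ioi_w_le hk ha hs

end Weights

variable {s : ℝ}

def c : ℝ := (2 * √π)⁻¹

/-- `Ai(s) ~ c e^{-ξ} s^{-1/4} Σ (-1)ⁿ uₙ ξ⁻ⁿ` with `u₁ = 5/72`, `u₂ = 385/10368`, truncated
after three terms and rewritten with `ξ⁻¹ = (3/2) s^{-3/2}`. -/
def m (s : ℝ) : ℝ :=
  c * (w 1 (-1 / 4) s - 5 / 48 * w 1 (-7 / 4) s + 385 / 4608 * w 1 (-13 / 4) s)

def m' (s : ℝ) : ℝ :=
  c * (-w 1 (1 / 4) s - 7 / 48 * w 1 (-5 / 4) s + 455 / 4608 * w 1 (-11 / 4) s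
    - 5005 / 18432 * w 1 (-17 / 4) s)

def r (s : ℝ) : ℝ := 85085 / 73728 * c * w 1 (-21 / 4) s

def A (s : ℝ) : ℝ :=
  c * (w 1 (-3 / 4) s - 41 / 48 * w 1 (-9 / 4) s + 9241 / 4608 * w 1 (-15 / 4) s)

lemma hasDerivAt_m (hs : 0 < s) : HasDerivAt m (m' s) s := by
  refine (((hasDerivAt_w hs).sub ((hasDerivAt_w hs).const_mul _)).add
    ((hasDerivAt_w hs).const_mul _)).const_mul c |>.congr_deriv ?_
  rw [m']; ring_nf

lemma hasDerivAt_m' (hs : 0 < s) : HasDerivAt m' (s * m s + r s) s := by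
  refine ((((hasDerivAt_w hs).neg.sub ((hasDerivAt_w hs).const_mul _)).add
    ((hasDerivAt_w hs).const_mul _)).sub ((hasDerivAt_w hs).const_mul _)).const_mul c
    |>.congr_deriv ?_
  simp only [m, r, mul_add, mul_sub, mul_left_comm s, mul_w hs]
  norm_num; ring

lemma hasDerivAt_A (hs : 0 < s) :
    HasDerivAt A (-m s - 46205 / 6144 * c * w 1 (-19 / 4) s) s := by
  refine (((hasDerivAt_w hs).sub ((hasDerivAt_w hs).const_mul _)).add
    ((hasDerivAt_w hs).const_mul _)).const_mul c |>.congr_deriv ?_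
  norm_num [m]; ring

lemma tendsto_A : Tendsto A atTop (𝓝 0) := by
  have h := (((tendsto_w_atTop (a := -3 / 4) one_pos).sub
    ((tendsto_w_atTop (a := -9 / 4) one_pos).const_mul (41 / 48))).add
    ((tendsto_w_atTop (a := -15 / 4) one_pos).const_mul (9241 / 4608))).const_mul c
  simp only [mul_zero, sub_zero, add_zero] at h
  exact h

lemma tendsto_m_div_w : Tendsto (fun s => m s / w 1 (-1 / 4) s) atTop (𝓝 c) := by
  have h1 : Tendsto (fun s : ℝ => s ^ (-(3 / 2 : ℝ))) atTop (𝓝 0) :=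
    tendsto_rpow_neg_atTop (by norm_num)
  have h2 : Tendsto (fun s : ℝ => s ^ (-(3 : ℝ))) atTop (𝓝 0) :=
    tendsto_rpow_neg_atTop (by norm_num)
  have h := (((h1.const_mul (5 / 48)).const_sub 1).add (h2.const_mul (385 / 4608))).const_mul c
  rw [mul_zero, mul_zero, add_zero, sub_zero, mul_one] at h
  refine h.congr' ?_
  filter_upwards [eventually_gt_atTop 0] with s hs
  have e1 : w 1 (-7 / 4) s = w 1 (-1 / 4) s * s ^ (-(3 / 2 : ℝ)) := by
    rw [w_mul_rpow hs]; norm_num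
  have e2 : w 1 (-13 / 4) s = w 1 (-1 / 4) s * s ^ (-(3 : ℝ)) := by
    rw [w_mul_rpow hs]; norm_num
  rw [eq_div_iff (w_pos hs).ne', m, e1, e2]; ring

def φ : ℝ → ℝ := w (-1) (-1 / 4)

def φ' (s : ℝ) : ℝ := w (-1) (1 / 4) s - 1 / 4 * w (-1) (-5 / 4) s

lemma hasDerivAt_φ (hs : 0 < s) : HasDerivAt φ (φ' s) s :=
  (hasDerivAt_w hs).congr_deriv (by norm_num [φ']; ring)

lemma hasDerivAt_φ' (hs : 0 < s) :
    HasDerivAt φ' (s * φ s + 5 / 16 * w (-1) (-9 / 4) s) s := by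
  refine ((hasDerivAt_w hs).sub ((hasDerivAt_w hs).const_mul _)) |>.congr_deriv ?_
  rw [φ, mul_w hs]; norm_num; ring

lemma φ_pos (hs : 0 < s) : 0 < φ s := w_pos hs

lemma φ_mul_w (hs : 0 < s) : φ s * w 1 (1 / 4) s = 1 := by
  rw [φ, w_mul_w hs]; norm_num [w]

lemma div_φ_eq_mul (x : ℝ) (hs : 0 < s) : x / φ s = x * w 1 (1 / 4) s := by
  rw [div_eq_iff (φ_pos hs).ne', mul_assoc, mul_comm (w 1 _ _), φ_mul_w hs, mul_one]

lemma φ_sq_mul_w (hs : 0 < s) : φ s ^ 2 * w 2 (1 / 2) s = 1 := by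
  rw [sq, φ, w_mul_w hs, w_mul_w hs]; norm_num [w]

lemma φ_mul_w_cube (hs : 0 < s) : φ s * w 1 (-1 / 4) s ^ 3 = w 2 (-1) s := by
  rw [φ, pow_three, ← mul_assoc, ← mul_assoc, w_mul_w hs, w_mul_w hs, w_mul_w hs]; norm_num

variable {q q' : ℝ → ℝ}

section Normalization

variable
  (hnorm : Tendsto (fun s : ℝ =>
    2 * √π * s ^ ((1 : ℝ) / 4) * exp (2 / 3 * s ^ ((3 : ℝ) / 2)) * q s) atTop (𝓝 1))

include hnorm in
lemma tendsto_div_w_of_normalization : Tendsto (fun s => q s / w 1 (-1 / 4) s) atTop (𝓝 c) := by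
  refine (mul_one c ▸ hnorm.const_mul c).congr' ?_
  filter_upwards [eventually_gt_atTop 0] with s hs
  have e1 : s ^ ((1 : ℝ) / 4) * s ^ ((-1 : ℝ) / 4) = 1 := by rw [← rpow_add hs]; norm_num
  have e2 : exp (2 / 3 * s ^ ((3 : ℝ) / 2)) * exp (-(1 * ξ s)) = 1 := by
    rw [← exp_add, ξ]; simp
  rw [eq_div_iff (w_pos hs).ne', c, w]
  calc _ = ((2 * √π)⁻¹ * (2 * √π)) * (s ^ ((1 : ℝ) / 4) * s ^ ((-1 : ℝ) / 4))
        * (exp (2 / 3 * s ^ ((3 : ℝ) / 2)) * exp (-(1 * ξ s))) * q s := by ring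
    _ = q s := by rw [e1, e2, inv_mul_cancel₀ (by positivity)]; ring

include hnorm in
lemma isBigO_of_normalization : q =O[atTop] w 1 (-1 / 4) :=
  isBigO_of_div_tendsto_nhds ((eventually_gt_atTop 0).mono fun _ hs hw => absurd hw (w_pos hs).ne')
    c (tendsto_div_w_of_normalization hnorm)

include hnorm in
lemma isLittleO_sub_m_of_normalization : (fun s => q s - m s) =o[atTop] w 1 (-1 / 4) := by
  refine (isLittleO_iff_tendsto'
    ((eventually_gt_atTop 0).mono fun _ hs hw => absurd hw (w_pos hs).ne')).2 ?_
  simpa only [sub_div, sub_self] using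
    (tendsto_div_w_of_normalization hnorm).sub tendsto_m_div_w

end Normalization

def wronskian (q q' : ℝ → ℝ) (s : ℝ) : ℝ := φ s * (q' s - m' s) - φ' s * (q s - m s)

def wronskian' (q : ℝ → ℝ) (s : ℝ) : ℝ :=
  φ s * (2 * q s ^ 3 - r s) - 5 / 16 * w (-1) (-9 / 4) s * (q s - m s)

lemma continuousOn_wronskian' (hq : Continuous q) : ContinuousOn (wronskian' q) (Ioi 0) :=
  fun _ hs => ContinuousAt.continuousWithinAt <|
    (continuousAt_w hs).mul ((continuousAt_const.mul (hq.continuousAt.pow 3)).sub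
      (continuousAt_const.mul (continuousAt_w hs))) |>.sub
    ((continuousAt_const.mul (continuousAt_w hs)).mul
      (hq.continuousAt.sub (hasDerivAt_m hs).continuousAt))

/-- The residual `r = O(e^{-ξ} s^{-21/4})` of the model is what limits the gain to `α ≤ 3`. -/
lemma isBigO_wronskian' {α : ℝ} (hqO : q =O[atTop] w 1 (-1 / 4))
    (hh : (fun s => q s - m s) =O[atTop] w 1 (-1 / 4 - α)) (hα : α ≤ 3) :
    wronskian' q =O[atTop] fun u => u ^ (-5 / 2 - α) := by
  have hpow := isBigO_rpow_rpow_atTop (show (-11 / 2 : ℝ) ≤ -5 / 2 - α by linarith)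
  have hcube : (fun u => φ u * q u ^ 3) =O[atTop] fun u => u ^ (-11 / 2 : ℝ) :=
    ((isBigO_refl φ atTop).mul (hqO.pow 3)).trans <|
      (isBigO_w_rpow two_pos (-1) _).congr' (by
        filter_upwards [eventually_gt_atTop 0] with u hu using (φ_mul_w_cube hu).symm) .rfl
  have hr : (fun u => φ u * r u) =O[atTop] fun u => u ^ (-11 / 2 : ℝ) :=
    (isBigO_refl (fun u : ℝ => u ^ (-11 / 2 : ℝ)) atTop).const_mul_left (85085 / 73728 * c)
      |>.congr' (by
        filter_upwards [eventually_gt_atTop 0] with u hu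
        rw [r, φ, mul_left_comm, w_mul_w hu]; norm_num [w_zero_left]) .rfl
  have hlin : (fun u => w (-1) (-9 / 4) u * (q u - m u)) =O[atTop] fun u => u ^ (-5 / 2 - α) :=
    ((isBigO_refl _ atTop).mul hh).congr' .rfl (by
      filter_upwards [eventually_gt_atTop 0] with u hu
      rw [w_mul_w hu, ← w_zero_left]; ring_nf)
  refine ((((hcube.trans hpow).const_mul_left 2).sub (hr.trans hpow)).sub
    (hlin.const_mul_left (5 / 16))).congr_left fun u => ?_
  rw [wronskian']; ring

lemma integrableOn_wronskian' (hq : Continuous q) (hqO : q =O[atTop] w 1 (-1 / 4))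
    (hh : (fun s => q s - m s) =O[atTop] w 1 (-1 / 4)) (hs : 0 < s) :
    IntegrableOn (wronskian' q) (Ioi s) :=
  integrableOn_Ioi_of_isBigO ((continuousOn_wronskian' hq).mono (Ici_subset_Ioi.2 hs))
    (isBigO_wronskian' (α := 0) hqO (by simpa using hh) (by norm_num))
    (integrableAtFilter_rpow_atTop_iff.2 (by norm_num))

lemma isLittleO_sub_m_div_φ (hh : (fun s => q s - m s) =o[atTop] w 1 (-1 / 4)) :
    (fun s => (q s - m s) / φ s) =o[atTop] w 2 0 :=
  (hh.mul_isBigO (isBigO_refl (w 1 (1 / 4)) atTop)).congr'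
    (by filter_upwards [eventually_gt_atTop 0] with s hs using (div_φ_eq_mul _ hs).symm)
    (by filter_upwards [eventually_gt_atTop 0] with s hs; rw [w_mul_w hs]; norm_num)

lemma integrableOn_mul_w_of_tendsto {f : ℝ → ℝ} {L : ℝ} (hf : ContinuousOn f (Ioi 0))
    (hL : Tendsto f atTop (𝓝 L)) (hs : 0 < s) :
    IntegrableOn (fun u => f u * w 2 (1 / 2) u) (Ioi s) :=
  integrableOn_Ioi_of_isBigO ((hf.mul continuousOn_w).mono (Ici_subset_Ioi.2 hs))
    (((hL.isBigO_one ℝ).mul (isBigO_refl (w 2 (1 / 2)) atTop)).congr_right fun _ => one_mul _)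
    (integrableAtFilter_w two_pos le_rfl)

section Solution

variable (hq : ∀ s, HasDerivAt q (q' s) s) (hq' : ∀ s, HasDerivAt q' (2 * q s ^ 3 + s * q s) s)
  (hqO : q =O[atTop] w 1 (-1 / 4)) (hh : (fun s => q s - m s) =o[atTop] w 1 (-1 / 4))

include hq hq' in
lemma hasDerivAt_wronskian (hs : 0 < s) : HasDerivAt (wronskian q q') (wronskian' q s) s := by
  have hd : HasDerivAt (fun s => q s - m s) (q' s - m' s) s := (hq s).sub (hasDerivAt_m hs)
  have hd' : HasDerivAt (fun s => q' s - m' s) (s * (q s - m s) + (2 * q s ^ 3 - r s)) s :=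
    ((hq' s).sub (hasDerivAt_m' hs)).congr_deriv (by ring)
  exact ((hasDerivAt_φ hs).wronskian (hasDerivAt_φ' hs) hd hd').congr_deriv
    (by simp only [wronskian']; ring)

include hq in
lemma hasDerivAt_sub_m_div_φ (hs : 0 < s) :
    HasDerivAt (fun s => (q s - m s) / φ s) (wronskian q q' s * w 2 (1 / 2) s) s := by
  have hd : HasDerivAt (fun s => q s - m s) (q' s - m' s) s := (hq s).sub (hasDerivAt_m hs)
  refine (hd.div (hasDerivAt_φ hs) (φ_pos hs).ne').congr_deriv ?_
  rw [div_eq_iff (pow_pos (φ_pos hs) 2).ne', mul_assoc, mul_comm (w 2 _ _), φ_sq_mul_w hs,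
    mul_one, wronskian]
  ring

include hq hq' in
lemma continuousOn_wronskian : ContinuousOn (wronskian q q') (Ioi 0) := fun _ hs =>
  (hasDerivAt_wronskian hq hq' hs).continuousAt.continuousWithinAt

include hq hq' hqO hh in
lemma exists_tendsto_wronskian : ∃ L, Tendsto (wronskian q q') atTop (𝓝 L) :=
  ⟨_, tendsto_limUnder_of_hasDerivAt_of_integrableOn_Ioi
    (fun _ hx => hasDerivAt_wronskian hq hq' (zero_lt_one.trans hx))
    (integrableOn_wronskian' (Differentiable.continuous fun s => (hq s).differentiableAt) hqO
      hh.isBigO one_pos)⟩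

include hq hq' hh in
lemma sub_m_div_φ_eq_neg_integral {L : ℝ} (hL : Tendsto (wronskian q q') atTop (𝓝 L))
    (hs : 0 < s) : (q s - m s) / φ s = -∫ u in Ioi s, wronskian q q' u * w 2 (1 / 2) u := by
  have := integral_Ioi_of_hasDerivAt_of_tendsto'
    (fun _ hx => hasDerivAt_sub_m_div_φ hq (hs.trans_le hx))
    (integrableOn_mul_w_of_tendsto (continuousOn_wronskian hq hq') hL hs)
    ((isLittleO_sub_m_div_φ hh).isBigO.trans_tendsto (tendsto_w_atTop two_pos))
  linarith

include hq hq' hqO hh in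
lemma tendsto_wronskian_zero : Tendsto (wronskian q q') atTop (𝓝 0) := by
  obtain ⟨L, hL⟩ := exists_tendsto_wronskian hq hq' hqO hh
  have hdev : (fun s => ∫ u in Ioi s, (wronskian q q' u - L) * w 2 (1 / 2) u) =o[atTop] w 2 0 :=
    ((((isLittleO_one_iff ℝ).2 (tendsto_sub_nhds_zero_iff.2 hL)).mul_isBigO
      (isBigO_refl (w 2 (1 / 2)) atTop)).congr_right fun _ => one_mul _).integral_Ioi
      (eventually_integrableOn_w two_pos le_rfl) eventually_w_nonneg
    |>.trans_isBigO ((isBigO_integral_Ioi_w two_pos le_rfl).congr_right fun _ => by norm_num)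
  -- `h / φ = -(L/2) e^{-2ξ} + o(e^{-2ξ})`, while `h / φ = o(e^{-2ξ})` by the normalization
  have hconst : (fun s => L / 2 * w 2 0 s) =o[atTop] w 2 0 := by
    refine ((isLittleO_sub_m_div_φ hh).neg_left.sub hdev).congr' ?_ .rfl
    filter_upwards [eventually_gt_atTop 0] with s hs
    simp only [sub_mul]
    rw [sub_m_div_φ_eq_neg_integral hq hq' hh hL hs,
      integral_sub (integrableOn_mul_w_of_tendsto (continuousOn_wronskian hq hq') hL hs)
        ((integrableOn_w_half two_pos hs).const_mul L),
      integral_const_mul, integral_Ioi_w_half two_pos hs]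
    ring
  obtain rfl : L = 0 := by
    by_contra hL0
    exact isLittleO_irrefl ((eventually_gt_atTop 0).frequently.mono fun _ hs => (w_pos hs).ne')
      ((isLittleO_const_mul_left_iff (div_ne_zero hL0 two_ne_zero)).1 hconst)
  exact hL

include hq hq' hqO hh in
lemma wronskian_eq_neg_integral (hs : 0 < s) :
    wronskian q q' s = -∫ u in Ioi s, wronskian' q u := by
  have := integral_Ioi_of_hasDerivAt_of_tendsto'
    (fun _ hx => hasDerivAt_wronskian hq hq' (hs.trans_le hx))
    (integrableOn_wronskian' (Differentiable.continuous fun s => (hq s).differentiableAt) hqO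
      hh.isBigO hs)
    (tendsto_wronskian_zero hq hq' hqO hh)
  linarith

include hq hq' hqO hh in
lemma isBigO_wronskian {α : ℝ} (hα0 : 0 ≤ α) (hα3 : α ≤ 3)
    (hK : (fun s => q s - m s) =O[atTop] w 1 (-1 / 4 - α)) :
    wronskian q q' =O[atTop] fun s => s ^ (-3 / 2 - α) := by
  have h := ((isBigO_wronskian' hqO hK hα3).integral_Ioi
      ((eventually_gt_atTop 0).mono fun _ hs => integrableOn_Ioi_rpow_of_lt (by linarith) hs)
      ((eventually_gt_atTop 0).mono fun _ hu => (rpow_pos_of_pos hu _).le)).trans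
    (isBigO_integral_Ioi_rpow (by linarith))
  refine h.neg_left.congr' ?_ (.of_eq (funext fun s => by ring_nf))
  filter_upwards [eventually_gt_atTop 0] with s hs
  exact (wronskian_eq_neg_integral hq hq' hqO hh hs).symm

include hq hq' hqO hh in
lemma isBigO_sub_m_improve {α : ℝ} (hα0 : 0 ≤ α) (hα3 : α ≤ 3)
    (hK : (fun s => q s - m s) =O[atTop] w 1 (-1 / 4 - α)) :
    (fun s => q s - m s) =O[atTop] w 1 (-1 / 4 - (α + 3 / 2)) := by
  have hWw : (fun u => wronskian q q' u * w 2 (1 / 2) u) =O[atTop] w 2 (-1 - α) :=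
    ((isBigO_wronskian hq hq' hqO hh hα0 hα3 hK).mul (isBigO_refl (w 2 (1 / 2)) atTop)).congr'
      .rfl (by
        filter_upwards [eventually_gt_atTop 0] with u hu
        rw [mul_comm, w_mul_rpow hu]; ring_nf)
  have hI := (hWw.integral_Ioi (eventually_integrableOn_w two_pos (by linarith))
    eventually_w_nonneg).trans (isBigO_integral_Ioi_w two_pos (by linarith))
  refine ((isBigO_refl φ atTop).mul hI.neg_left).congr' ?_ ?_
  · filter_upwards [eventually_gt_atTop 0] with s hs
    rw [← sub_m_div_φ_eq_neg_integral hq hq' hh (tendsto_wronskian_zero hq hq' hqO hh) hs,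
      mul_div_cancel₀ _ (φ_pos hs).ne']
  · filter_upwards [eventually_gt_atTop 0] with s hs
    rw [φ, w_mul_w hs]; ring_nf

include hq hq' hqO hh in
lemma isBigO_sub_m : (fun s => q s - m s) =O[atTop] w 1 (-19 / 4) := by
  have h₀ : (fun s => q s - m s) =O[atTop] w 1 (-1 / 4 - 0) := by simpa using hh.isBigO
  have h₁ := isBigO_sub_m_improve hq hq' hqO hh le_rfl (by norm_num) h₀
  have h₂ := isBigO_sub_m_improve hq hq' hqO hh (by norm_num) (by norm_num) h₁
  have h₃ := isBigO_sub_m_improve hq hq' hqO hh (by norm_num) (by norm_num) h₂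
  convert h₃ using 2; norm_num

include hq hqO in
lemma integral_Ioi_add_deriv_A (hs : 0 < s) :
    ∫ u in Ioi s, (q u + (-m u - 46205 / 6144 * c * w 1 (-19 / 4) u))
      = (∫ u in Ioi s, q u) - A s := by
  have hw {a : ℝ} (ha : a ≤ 1 / 2) : IntegrableOn (w 1 a) (Ioi s) := integrableOn_w one_pos ha hs
  have hm : IntegrableOn m (Ioi s) :=
    (((hw (by norm_num)).sub ((hw (by norm_num)).const_mul _)).add
      ((hw (by norm_num)).const_mul _)).const_mul c
  have hA' : IntegrableOn (fun u => -m u - 46205 / 6144 * c * w 1 (-19 / 4) u) (Ioi s) :=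
    hm.neg.sub ((hw (by norm_num)).const_mul _)
  have hq_int : IntegrableOn q (Ioi s) :=
    integrableOn_Ioi_of_isBigO
      (Differentiable.continuous fun s => (hq s).differentiableAt).continuousOn hqO
      (integrableAtFilter_w one_pos (by norm_num))
  rw [integral_add hq_int hA', integral_Ioi_of_hasDerivAt_of_tendsto'
    (fun _ hx => hasDerivAt_A (hs.trans_le hx)) hA' tendsto_A]
  ring

include hq hq' hqO hh in
lemma isBigO_integral_sub_A :
    (fun s => (∫ u in Ioi s, q u) - A s) =O[atTop] w 1 (-21 / 4) := by
  have h := ((isBigO_sub_m hq hq' hqO hh).sub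
    ((isBigO_refl (w 1 (-19 / 4)) atTop).const_mul_left (46205 / 6144 * c))).congr_left
    (f₂ := fun u => q u + (-m u - 46205 / 6144 * c * w 1 (-19 / 4) u)) fun u => by ring
  refine ((h.integral_Ioi (eventually_integrableOn_w one_pos (by norm_num))
    eventually_w_nonneg).trans (isBigO_integral_Ioi_w one_pos (by norm_num))).congr' ?_
    (.of_eq (by norm_num))
  filter_upwards [eventually_gt_atTop 0] with s hs
  exact integral_Ioi_add_deriv_A hq hqO hs

end Solution

lemma A_eq_of_pos (hs : 0 < s) :
    A s = exp (-(2 / 3) * s ^ ((3 : ℝ) / 2)) / (2 * √π * s ^ ((3 : ℝ) / 4)) *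
      (1 - 41 / 48 * s ^ (-(3 : ℝ) / 2) + 9241 / 4608 * s ^ (-(3 : ℝ))) := by
  have e0 : exp (-(2 / 3) * s ^ ((3 : ℝ) / 2)) / (2 * √π * s ^ ((3 : ℝ) / 4))
      = c * w 1 (-3 / 4) s := by
    rw [c, w, ξ, div_eq_mul_inv, mul_inv, ← rpow_neg hs.le]; norm_num; ring
  have e1 : w 1 (-9 / 4) s = w 1 (-3 / 4) s * s ^ (-(3 : ℝ) / 2) := by
    rw [w_mul_rpow hs]; norm_num
  have e2 : w 1 (-15 / 4) s = w 1 (-3 / 4) s * s ^ (-(3 : ℝ)) := by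
    rw [w_mul_rpow hs]; norm_num
  rw [A, e0, e1, e2]; ring

lemma w_one_eq_of_pos (hs : 0 < s) : w 1 (-21 / 4) s =
    exp (-(2 / 3) * s ^ ((3 : ℝ) / 2)) * s ^ (-(3 : ℝ) / 4) * s ^ (-(9 : ℝ) / 2) := by
  rw [mul_assoc, ← rpow_add hs, w, ξ]; norm_num

end HastingsMcLeod

end

/-- right-tail asymptotic expansion of `∫_s^∞ q`, for the Hastings–McLeod
solution of Painlevé II:
`∫_s^∞ q = e^{-(2/3)s^{3/2}}/(2√π s^{3/4}) · (1 - (41/48)s^{-3/2} + (9241/4608)s^{-3} + O(s^{-9/2}))`. -/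
theorem hastings_mcleod_tail_integral_expansion (q q' : ℝ → ℝ)
    (hq : ∀ s, HasDerivAt q (q' s) s)
    (hq' : ∀ s, HasDerivAt q' (2 * q s ^ 3 + s * q s) s)
    (hnorm : Tendsto (fun s : ℝ =>
        2 * Real.sqrt π * s ^ ((1 : ℝ) / 4) * Real.exp (2 / 3 * s ^ ((3 : ℝ) / 2)) * q s)
      atTop (nhds 1)) :
    ∃ C > 0, ∃ s₀ : ℝ, ∀ s ≥ s₀,
      |(∫ u in Set.Ioi s, q u) -
          Real.exp (-(2 / 3) * s ^ ((3 : ℝ) / 2)) / (2 * Real.sqrt π * s ^ ((3 : ℝ) / 4)) *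
            (1 - 41 / 48 * s ^ (-(3 : ℝ) / 2) + 9241 / 4608 * s ^ (-(3 : ℝ)))|
        ≤ C * Real.exp (-(2 / 3) * s ^ ((3 : ℝ) / 2)) * s ^ (-(3 : ℝ) / 4) *
            s ^ (-(9 : ℝ) / 2) := by
  obtain ⟨C, hC, hbound⟩ := (HastingsMcLeod.isBigO_integral_sub_A hq hq'
    (HastingsMcLeod.isBigO_of_normalization hnorm)
    (HastingsMcLeod.isLittleO_sub_m_of_normalization hnorm)).exists_pos
  obtain ⟨s₀, hs₀⟩ := eventually_atTop.1 ((isBigOWith_iff.1 hbound).and (eventually_gt_atTop 0))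
  refine ⟨C, hC, s₀, fun s hs => ?_⟩
  obtain ⟨hle, hs⟩ := hs₀ s hs
  rw [Real.norm_eq_abs, norm_of_nonneg (HastingsMcLeod.w_pos hs).le,
    HastingsMcLeod.A_eq_of_pos hs, HastingsMcLeod.w_one_eq_of_pos hs] at hle
  exact hle.trans_eq (by ring)
end
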